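/- arXiv:1610.01703 — 3 statements merged into one kernel-verified Lean document; each statement's English description precedes it below -/
import Mathlib

section
/- Let g be a probability density with ∫_ℝ ω g(ω) dω = 0 and [−m, m] ⊂ supp g ⊂ [−M, M], let K ≥ m, and suppose R^∞ ∈ (0, 1] satisfies the self-consistency relation R^∞ = ∫_ℝ g(ω) √(1 − (ω/(K R^∞))²) dω (in particular M ≤ K R^∞ so the integrand is real on supp g). Then R^∞ ≥ √(1 − (M/(K R^∞))²) and R^∞ ≥ m · min_{ω ∈ [−m,m]} g(ω). -/
open MeasureTheory Filter

/-!
Both bounds compare the integrand of the self-consistency relation with something simpler.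
Since `supp g ⊆ [-M, M]`, the factor `√(1 - (ω/a)²)`, `a = K R^∞`, is at least `√(1 - (M/a)²)`
wherever `g` lives, and `g` has mass one. For the second bound, `[-m, m] ⊆ supp g ⊆ [-M, M]`
gives `m ≤ a`, so on `[-m, m]` the integrand dominates `(min g) (1 - (ω/m)²)`, whose integral
is `(4/3) m · min g`.
-/

section SelfConsistency

variable {g : ℝ → ℝ} {a : ℝ}

theorem MeasureTheory.Integrable.mul_sqrt_one_sub_sq_div (hg : Integrable g) (a : ℝ) :
    Integrable (fun ω ↦ g ω * √(1 - (ω / a) ^ 2)) :=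
  hg.mul_bdd (c := 1) (by fun_prop) <| .of_forall fun ω ↦ by
    rw [Real.norm_eq_abs, abs_of_nonneg (Real.sqrt_nonneg _), Real.sqrt_le_one]
    nlinarith [sq_nonneg (ω / a)]

theorem le_integral_mul_of_forall_mem_support_le {α : Type*} [MeasurableSpace α]
    {μ : Measure α} {g f : α → ℝ} {c : ℝ} (hg_nonneg : ∀ x, 0 ≤ g x)
    (hg_one : ∫ x, g x ∂μ = 1) (hgf : Integrable (fun x ↦ g x * f x) μ)
    (hf : ∀ x ∈ Function.support g, c ≤ f x) :
    c ≤ ∫ x, g x * f x ∂μ := by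
  have hg : Integrable g μ := .of_integral_ne_zero (by simp [hg_one])
  calc c = ∫ x, g x * c ∂μ := by rw [integral_mul_const, hg_one, one_mul]
    _ ≤ ∫ x, g x * f x ∂μ := integral_mono (hg.mul_const c) hgf fun x ↦ by
      by_cases hx : g x = 0
      · simp [hx]
      · exact mul_le_mul_of_nonneg_left (hf x hx) (hg_nonneg x)

theorem sqrt_one_sub_sq_div_le_of_abs_le {ω M : ℝ} (h : |ω| ≤ M) :
    √(1 - (M / a) ^ 2) ≤ √(1 - (ω / a) ^ 2) := by
  refine Real.sqrt_le_sqrt (sub_le_sub_left ?_ 1)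
  rw [div_pow, div_pow]
  exact div_le_div_of_nonneg_right (sq_le_sq' (abs_le.mp h).1 (abs_le.mp h).2) (sq_nonneg a)

theorem one_sub_sq_div_le_sqrt_one_sub_sq_div {m : ℝ} (hm : 0 < m) (hma : m ≤ a) (ω : ℝ) :
    1 - (ω / m) ^ 2 ≤ √(1 - (ω / a) ^ 2) := by
  have hdiv : (ω / a) ^ 2 ≤ (ω / m) ^ 2 := by
    rw [div_pow, div_pow]
    gcongr
  calc 1 - (ω / m) ^ 2 ≤ 1 - (ω / a) ^ 2 := by linarith
    _ ≤ √(1 - (ω / a) ^ 2) := Real.le_sqrt_self_iff.mpr (by nlinarith [sq_nonneg (ω / a)])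

theorem integral_one_sub_sq_div {m : ℝ} (hm : m ≠ 0) :
    ∫ ω in -m..m, (1 - (ω / m) ^ 2) = 4 * m / 3 := by
  simp_rw [div_pow]
  rw [intervalIntegral.integral_sub intervalIntegrable_const
      ((intervalIntegral.intervalIntegrable_pow 2).div_const _),
    intervalIntegral.integral_div, integral_pow, intervalIntegral.integral_const, smul_eq_mul]
  field_simp
  ring

theorem mul_sInf_image_Icc_le_integral_mul_sqrt {m : ℝ} (hg_nonneg : ∀ ω, 0 ≤ g ω)
    (hint : Integrable (fun ω ↦ g ω * √(1 - (ω / a) ^ 2))) (hm : 0 < m) (hma : m ≤ a) :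
    m * sInf (g '' Set.Icc (-m) m) ≤ ∫ ω, g ω * √(1 - (ω / a) ^ 2) := by
  set c := sInf (g '' Set.Icc (-m) m)
  have hc_nonneg : 0 ≤ c := Real.sInf_nonneg (by rintro _ ⟨ω, -, rfl⟩; exact hg_nonneg ω)
  have hc_le : ∀ ω ∈ Set.Icc (-m) m, c ≤ g ω := fun ω hω ↦
    csInf_le ⟨0, by rintro _ ⟨x, -, rfl⟩; exact hg_nonneg x⟩ ⟨ω, hω, rfl⟩
  have hpt : ∀ ω ∈ Set.Icc (-m) m, c * (1 - (ω / m) ^ 2) ≤ g ω * √(1 - (ω / a) ^ 2) := by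
    intro ω hω
    have hnonneg : 0 ≤ 1 - (ω / m) ^ 2 := by
      rw [sub_nonneg, div_pow, div_le_one (by positivity)]
      exact sq_le_sq' hω.1 hω.2
    calc c * (1 - (ω / m) ^ 2) ≤ g ω * (1 - (ω / m) ^ 2) := by gcongr; exact hc_le ω hω
      _ ≤ g ω * √(1 - (ω / a) ^ 2) := by
        gcongr
        · exact hg_nonneg ω
        · exact one_sub_sq_div_le_sqrt_one_sub_sq_div hm hma ω
  calc m * c ≤ c * (4 * m / 3) := by nlinarith
    _ = ∫ ω in -m..m, c * (1 - (ω / m) ^ 2) := by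
      rw [intervalIntegral.integral_const_mul, integral_one_sub_sq_div hm.ne']
    _ ≤ ∫ ω in -m..m, g ω * √(1 - (ω / a) ^ 2) :=
      intervalIntegral.integral_mono_on (by linarith) (Continuous.intervalIntegrable (by fun_prop) _ _)
        hint.intervalIntegrable hpt
    _ ≤ ∫ ω, g ω * √(1 - (ω / a) ^ 2) := by
      rw [intervalIntegral.integral_of_le (by linarith)]
      exact setIntegral_le_integral hint (.of_forall fun ω ↦
        mul_nonneg (hg_nonneg ω) (Real.sqrt_nonneg _))

end SelfConsistency

theorem stmt_9_general
    (g : ℝ → ℝ) (m M K RInf : ℝ)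
    (hg_nonneg : ∀ ω, 0 ≤ g ω)
    (hg_prob : (∫ ω : ℝ, g ω) = 1)
    (hsupp1 : Set.Icc (-m) m ⊆ Function.support g)
    (hsupp2 : Function.support g ⊆ Set.Icc (-M) M)
    (hMKR : M ≤ K * RInf)
    (hsc : RInf = ∫ ω : ℝ, g ω * Real.sqrt (1 - (ω / (K * RInf)) ^ 2)) :
    Real.sqrt (1 - (M / (K * RInf)) ^ 2) ≤ RInf ∧
    m * sInf (g '' Set.Icc (-m) m) ≤ RInf := by
  have hg : Integrable g := .of_integral_ne_zero (by simp [hg_prob])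
  have hint := hg.mul_sqrt_one_sub_sq_div (K * RInf)
  refine ⟨?_, ?_⟩
  · refine (le_integral_mul_of_forall_mem_support_le hg_nonneg hg_prob hint
      fun ω hω ↦ ?_).trans_eq hsc.symm
    exact sqrt_one_sub_sq_div_le_of_abs_le (abs_le.mpr (hsupp2 hω))
  rcases le_or_gt m 0 with hm | hm
  · have hR : 0 ≤ RInf := hsc ▸ integral_nonneg fun ω ↦
      mul_nonneg (hg_nonneg ω) (Real.sqrt_nonneg _)
    have hc : 0 ≤ sInf (g '' Set.Icc (-m) m) :=
      Real.sInf_nonneg (by rintro _ ⟨ω, -, rfl⟩; exact hg_nonneg ω)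
    nlinarith
  · have hma : m ≤ K * RInf := (hsupp2 (hsupp1 ⟨by linarith, le_rfl⟩)).2.trans hMKR
    exact (mul_sInf_image_Icc_le_integral_mul_sqrt hg_nonneg hint hm hma).trans_eq hsc.symm

/-- if `g` is a probability density with zero mean,
`[−m,m] ⊆ supp g ⊆ [−M,M]`, `K ≥ m`, and `R^∞ ∈ (0,1]` satisfies the
self-consistency relation `R^∞ = ∫ g(ω) √(1 − (ω/(K R^∞))²) dω` (with
`M ≤ K R^∞`), then `R^∞ ≥ √(1 − (M/(K R^∞))²)` and
`R^∞ ≥ m · min_{ω ∈ [−m,m]} g(ω)`. -/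
theorem stmt_9
    (g : ℝ → ℝ) (m M K RInf : ℝ)
    (hg_nonneg : ∀ ω, 0 ≤ g ω)
    (hg_prob : (∫ ω : ℝ, g ω) = 1)
    (hg_mean : (∫ ω : ℝ, ω * g ω) = 0)
    (hsupp1 : Set.Icc (-m) m ⊆ Function.support g)
    (hsupp2 : Function.support g ⊆ Set.Icc (-M) M)
    (hK : m ≤ K)
    (hR1 : 0 < RInf) (hR2 : RInf ≤ 1)
    (hMKR : M ≤ K * RInf)
    (hsc : RInf = ∫ ω : ℝ, g ω * Real.sqrt (1 - (ω / (K * RInf)) ^ 2)) :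
    Real.sqrt (1 - (M / (K * RInf)) ^ 2) ≤ RInf ∧
    m * sInf (g '' Set.Icc (-m) m) ≤ RInf :=
  stmt_9_general g m M K RInf hg_nonneg hg_prob hsupp1 hsupp2 hMKR hsc
end

section
/- Let ε0 and γ0 be constants with 0 < ε0 < 3√3/4 − 1 and π/3 ≤ γ0 < arcsin(1 − 2ε0/(2√3 + 1)). Then (1 + ε0)/(1 + sin γ0) < ℳ*(ε0, γ0) < 1. -/
/-!
Write `s = sin γ₀`, `c = cos γ₀`. Clearing the (positive) denominators, the lower bound is
`ε₀ c < 1` and the upper bound is `ε₀ < s (1 + c) - 1`. The hypothesis on `γ₀` says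
`√3/2 ≤ s` and `ε₀ < (2√3 + 1)(1 - s)/2`, so the upper bound reduces to the trigonometric
inequality `(2√3 + 3)/2 · (1 - s) ≤ s c` for `π/3 ≤ γ₀ ≤ π/2`, which is an equality at
`γ₀ = π/3` and `γ₀ = π/2`; squared, it becomes a polynomial inequality in `s` whose
difference has the factor `s - √3/2`.
-/

/-- `ℳ*(ε₀,γ₀) := (2 + ε₀ + cos γ₀)/((1 + sin γ₀)(1 + cos γ₀))`. -/
noncomputable def massStar (ε₀ γ₀ : ℝ) : ℝ :=
  (2 + ε₀ + Real.cos γ₀) / ((1 + Real.sin γ₀) * (1 + Real.cos γ₀))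

open Real

namespace massStar

variable {ε γ : ℝ}

lemma div_one_add_sin_lt_iff (hs : 0 < 1 + sin γ) (hc : 0 < 1 + cos γ) :
    (1 + ε) / (1 + sin γ) < massStar ε γ ↔ ε * cos γ < 1 := by
  rw [massStar, div_lt_div_iff₀ hs (mul_pos hs hc)]
  constructor <;> intro h <;> nlinarith

lemma lt_one_iff (hs : 0 < 1 + sin γ) (hc : 0 < 1 + cos γ) :
    massStar ε γ < 1 ↔ ε < sin γ * (1 + cos γ) - 1 := by
  rw [massStar, div_lt_one (mul_pos hs hc)]
  constructor <;> intro h <;> linarith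

end massStar

lemma mul_one_sub_le_mul_of_sq_add_sq_eq_one {s c : ℝ} (hs : √3 / 2 ≤ s) (hc : 0 ≤ c)
    (hsc : s ^ 2 + c ^ 2 = 1) : (2 * √3 + 3) / 2 * (1 - s) ≤ s * c := by
  have h3 : √3 ^ 2 = 3 := sq_sqrt (by norm_num)
  have hs0 : 0 ≤ s := le_trans (by positivity) hs
  have hs1 : s ≤ 1 := by nlinarith
  have hcubic : 0 ≤ s ^ 2 * (1 + s) - (1 - s) * (21 + 12 * √3) / 4 := by
    have hfactor : s ^ 2 * (1 + s) - (1 - s) * (21 + 12 * √3) / 4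
        = (s - √3 / 2) * (s ^ 2 + (√3 / 2 + 1) * s + 6 + 7 * √3 / 2) := by
      linear_combination (s + 7) / 4 * h3
    rw [hfactor]
    apply mul_nonneg (by linarith)
    positivity
  rw [← pow_le_pow_iff_left₀ (by nlinarith [sqrt_nonneg 3]) (by positivity) two_ne_zero]
  nlinarith [mul_nonneg (sub_nonneg.2 hs1) hcubic]

theorem stmt_11_general (ε₀ γ₀ : ℝ)
    (hγ₀ : Real.pi / 3 ≤ γ₀)
    (hγ₀' : γ₀ < Real.arcsin (1 - 2 * ε₀ / (2 * Real.sqrt 3 + 1))) :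
    (1 + ε₀) / (1 + Real.sin γ₀) < massStar ε₀ γ₀ ∧ massStar ε₀ γ₀ < 1 := by
  have hγ_lt : γ₀ < π / 2 := hγ₀'.trans_le (arcsin_le_pi_div_two _)
  have hγ_mem : γ₀ ∈ Set.Ico (-(π / 2)) (π / 2) := ⟨by linarith [pi_pos], hγ_lt⟩
  have hs : √3 / 2 ≤ sin γ₀ := by
    rw [← sin_pi_div_three]
    exact sin_le_sin_of_le_of_le_pi_div_two (by linarith [pi_pos]) hγ_lt.le hγ₀
  have hc : 0 < cos γ₀ := cos_pos_of_mem_Ioo ⟨by linarith [pi_pos], hγ_lt⟩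
  have hε : ε₀ < (2 * √3 + 1) * (1 - sin γ₀) / 2 := by
    have := (lt_arcsin_iff_sin_lt' hγ_mem).1 hγ₀'
    rw [lt_sub_comm, div_lt_iff₀ (by positivity)] at this
    linarith
  have hkey := mul_one_sub_le_mul_of_sq_add_sq_eq_one hs hc.le (sin_sq_add_cos_sq γ₀)
  have hs_pos : 0 < 1 + sin γ₀ := by linarith [sqrt_nonneg 3]
  have hc_pos : 0 < 1 + cos γ₀ := by linarith
  refine ⟨(massStar.div_one_add_sin_lt_iff hs_pos hc_pos).2 ?_,
    (massStar.lt_one_iff hs_pos hc_pos).2 (by linarith)⟩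
  have hε_lt_one : ε₀ < 1 := by
    nlinarith [mul_le_mul_of_nonneg_left hs (by positivity : (0 : ℝ) ≤ 2 * √3 + 1),
      sq_sqrt (show (0 : ℝ) ≤ 3 by norm_num)]
  nlinarith [cos_le_one γ₀]

/-- for `0 < ε₀ < 3√3/4 − 1` and `π/3 ≤ γ₀ < arcsin(1 − 2ε₀/(2√3 + 1))`,
one has `(1 + ε₀)/(1 + sin γ₀) < ℳ*(ε₀, γ₀) < 1`. -/
theorem stmt_11 (ε₀ γ₀ : ℝ)
    (hε₀ : 0 < ε₀) (hε₀' : ε₀ < 3 * Real.sqrt 3 / 4 - 1)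
    (hγ₀ : Real.pi / 3 ≤ γ₀)
    (hγ₀' : γ₀ < Real.arcsin (1 - 2 * ε₀ / (2 * Real.sqrt 3 + 1))) :
    (1 + ε₀) / (1 + Real.sin γ₀) < massStar ε₀ γ₀ ∧ massStar ε₀ γ₀ < 1 :=
  stmt_11_general ε₀ γ₀ hγ₀ hγ₀'
end

section
/- Let f be a C¹ solution of the Kuramoto–Sakaguchi equation with supp g ⊂ [−M, M] and ‖f0‖_{L∞} < ∞. Then ‖f(·,·,t)‖_{L∞(𝕋×[−M,M])} ≤ ‖f0‖_{L∞} e^{Kt} for all t ∈ [0, ∞). -/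
/-!
Maximum principle. Fix `ω`, `C' > sup f₀` and `K' > K`. If `f(·, ω, ·)` ever reached the
barrier `C' e^{K't}`, then at the first contact time `t` (which exists by periodicity in `θ` and
compactness) the contact point `θ` maximises `f(·, ω, t)`, so `∂_θ f = 0` there and the equation
reduces to `∂_t f = K (∬ cos (θ - θ*) f* dθ* dω*) f ≤ K f`, because `f ≥ 0` has total mass one.
Since the barrier grows at the faster rate `K'`, this contradicts the contact from below.
Let `C' ↓ C` and `K' ↓ K`.
-/

open MeasureTheory Filter Set Real Topology

section MeanField

variable {F : ℝ → ℝ → ℝ} {a b : ℝ}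

lemma abs_intervalIntegral_mul_le (hF : Continuous fun p : ℝ × ℝ => F p.1 p.2)
    (hF0 : ∀ y ω, 0 ≤ F y ω) (hab : a ≤ b) {c : ℝ → ℝ} (hc : Continuous c)
    (hc1 : ∀ y, |c y| ≤ 1) (ω : ℝ) :
    |∫ y in a..b, c y * F y ω| ≤ ∫ y in a..b, F y ω := by
  refine (intervalIntegral.abs_integral_le_integral_abs hab).trans <|
    intervalIntegral.integral_mono_on hab (Continuous.intervalIntegrable (by fun_prop) _ _)
      (Continuous.intervalIntegrable (by fun_prop) _ _) fun y _ => ?_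
  rw [abs_mul, abs_of_nonneg (hF0 y ω)]
  exact mul_le_of_le_one_left (hF0 y ω) (hc1 y)

lemma integrable_intervalIntegral_mul (hF : Continuous fun p : ℝ × ℝ => F p.1 p.2)
    (hF0 : ∀ y ω, 0 ≤ F y ω) (hab : a ≤ b) (hint : Integrable fun ω => ∫ y in a..b, F y ω)
    {c : ℝ → ℝ} (hc : Continuous c) (hc1 : ∀ y, |c y| ≤ 1) :
    Integrable fun ω => ∫ y in a..b, c y * F y ω := by
  refine hint.mono (Continuous.aestronglyMeasurable (by fun_prop)) (.of_forall fun ω => ?_)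
  rw [norm_eq_abs, norm_eq_abs,
    abs_of_nonneg (intervalIntegral.integral_nonneg hab fun y _ => hF0 y ω)]
  exact abs_intervalIntegral_mul_le hF hF0 hab hc hc1 ω

lemma integral_intervalIntegral_mul_le (hF : Continuous fun p : ℝ × ℝ => F p.1 p.2)
    (hF0 : ∀ y ω, 0 ≤ F y ω) (hab : a ≤ b) (hint : Integrable fun ω => ∫ y in a..b, F y ω)
    {c : ℝ → ℝ} (hc : Continuous c) (hc1 : ∀ y, |c y| ≤ 1) :
    ∫ ω, ∫ y in a..b, c y * F y ω ≤ ∫ ω, ∫ y in a..b, F y ω :=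
  integral_mono (integrable_intervalIntegral_mul hF hF0 hab hint hc hc1) hint fun ω =>
    (le_abs_self _).trans (abs_intervalIntegral_mul_le hF hF0 hab hc hc1 ω)

lemma integral_intervalIntegral_cos_sin (hF : Continuous fun p : ℝ × ℝ => F p.1 p.2)
    (hF0 : ∀ y ω, 0 ≤ F y ω) (hab : a ≤ b) (hint : Integrable fun ω => ∫ y in a..b, F y ω)
    (p q : ℝ) :
    ∫ ω, ∫ y in a..b, (p * cos y + q * sin y) * F y ω =
      p * (∫ ω, ∫ y in a..b, cos y * F y ω) + q * ∫ ω, ∫ y in a..b, sin y * F y ω := by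
  have hinner : ∀ ω, ∫ y in a..b, (p * cos y + q * sin y) * F y ω =
      p * (∫ y in a..b, cos y * F y ω) + q * ∫ y in a..b, sin y * F y ω := fun ω => by
    simp only [add_mul, mul_assoc]
    rw [intervalIntegral.integral_add (Continuous.intervalIntegrable (by fun_prop) _ _)
      (Continuous.intervalIntegrable (by fun_prop) _ _),
      intervalIntegral.integral_const_mul, intervalIntegral.integral_const_mul]
  simp only [hinner]
  rw [integral_add
    ((integrable_intervalIntegral_mul hF hF0 hab hint continuous_cos abs_cos_le_one).const_mul p)
    ((integrable_intervalIntegral_mul hF hF0 hab hint continuous_sin abs_sin_le_one).const_mul q),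
    integral_const_mul, integral_const_mul]

lemma hasDerivAt_integral_intervalIntegral_sin_sub_mul
    (hF : Continuous fun p : ℝ × ℝ => F p.1 p.2) (hF0 : ∀ y ω, 0 ≤ F y ω) (hab : a ≤ b)
    (hint : Integrable fun ω => ∫ y in a..b, F y ω) (x : ℝ) :
    HasDerivAt (fun x => ∫ ω, ∫ y in a..b, sin (x - y) * F y ω)
      (∫ ω, ∫ y in a..b, cos (x - y) * F y ω) x := by
  have hsin : ∀ x y, sin (x - y) = sin x * cos y + -cos x * sin y := fun x y => by
    rw [sin_sub]; ring
  simp only [hsin, cos_sub, integral_intervalIntegral_cos_sin hF hF0 hab hint]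
  exact (((hasDerivAt_sin x).mul_const _).add ((hasDerivAt_cos x).neg.mul_const _)).congr_deriv
    (by ring)

end MeanField

theorem HasDerivAt.le_of_le_on_Ico_of_eq {g ψ : ℝ → ℝ} {g' ψ' a t : ℝ} (hg : HasDerivAt g g' t)
    (hψ : HasDerivAt ψ ψ' t) (hat : a < t) (hle : ∀ s ∈ Ico a t, g s ≤ ψ s) (heq : g t = ψ t) :
    ψ' ≤ g' := by
  have hmax : IsLocalMaxOn (g - ψ) (Iic t) t := by
    filter_upwards [Icc_mem_nhdsLE hat] with s hs
    rcases hs.2.lt_or_eq with hst | rfl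
    · simpa [heq] using hle s ⟨hs.1, hst⟩
    · exact le_rfl
  have hcone : (-1 : ℝ) ∈ posTangentConeAt (Iic t) t :=
    mem_posTangentConeAt_of_segment_subset <| by
      rw [segment_symm, segment_eq_Icc (by linarith)]
      exact Icc_subset_Iic_self
  simpa using hmax.hasFDerivWithinAt_nonpos (hg.sub hψ).hasDerivWithinAt hcone

theorem IsCompact.forall_lt_of_forall_not_contact {α : Type*} [TopologicalSpace α] {S : Set α}
    (hS : IsCompact S) {u : α → ℝ → ℝ} (hu : Continuous (Function.uncurry u)) {ψ : ℝ → ℝ}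
    (hψ : Continuous ψ) (h0 : ∀ x ∈ S, u x 0 < ψ 0)
    (hcontact : ∀ x ∈ S, ∀ t, 0 < t → u x t = ψ t → (∀ y ∈ S, u y t ≤ ψ t) →
      (∀ s ∈ Ico 0 t, u x s < ψ s) → False) :
    ∀ x ∈ S, ∀ t, 0 ≤ t → u x t < ψ t := by
  intro x hx T hT
  by_contra! hxT
  have hZ : IsCompact ((S ×ˢ Icc 0 T) ∩ {p | ψ p.2 ≤ u p.1 p.2}) :=
    (hS.prod isCompact_Icc).inter_right (isClosed_le (by fun_prop) hu)
  obtain ⟨⟨x₀, t₀⟩, ⟨⟨hx₀, ht₀⟩, hle⟩, hmin⟩ :=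
    hZ.exists_isMinOn ⟨(x, T), ⟨hx, hT, le_rfl⟩, hxT⟩ continuous_snd.continuousOn
  have hbefore : ∀ y ∈ S, ∀ s ∈ Ico 0 t₀, u y s < ψ s := fun y hy s hs => by
    by_contra! h
    exact hs.2.not_ge (isMinOn_iff.mp hmin (y, s) ⟨⟨hy, hs.1, hs.2.le.trans ht₀.2⟩, h⟩)
  have ht₀pos : 0 < t₀ := ht₀.1.lt_of_ne fun h => by
    subst h
    exact (h0 x₀ hx₀).not_ge hle
  have hat : ∀ y ∈ S, u y t₀ ≤ ψ t₀ := fun y hy => by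
    have hcl : IsClosed {s | u y s ≤ ψ s} := isClosed_le (hu.uncurry_left y) hψ
    have hIcc : Icc 0 t₀ ⊆ {s | u y s ≤ ψ s} := by
      rw [← closure_Ico ht₀pos.ne]
      exact hcl.closure_subset_iff.mpr fun s hs => (hbefore y hy s hs).le
    exact hIcc ⟨ht₀pos.le, le_rfl⟩
  exact hcontact x₀ hx₀ t₀ ht₀pos (le_antisymm (hat x₀ hx₀) hle) hat (hbefore x₀ hx₀)

theorem le_mul_of_isMax_of_transport_eq_zero {K ω θ D : ℝ} (hK : 0 ≤ K) {F : ℝ → ℝ → ℝ}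
    (hF : Continuous fun p : ℝ × ℝ => F p.1 p.2) (hF0 : ∀ y ω, 0 ≤ F y ω)
    (hmass : ∫ ω, ∫ y in (0 : ℝ)..(2 * π), F y ω = 1)
    (hdiff : DifferentiableAt ℝ (fun x => F x ω) θ) (hmax : ∀ x, F x ω ≤ F θ ω)
    (htransport : D + deriv (fun x =>
      (ω - K * ∫ ω', ∫ y in (0 : ℝ)..(2 * π), sin (x - y) * F y ω') * F x ω) θ = 0) :
    D ≤ K * F θ ω := by
  have h2π : (0 : ℝ) ≤ 2 * π := two_pi_pos.le
  -- a non-integrable function would have integral `0`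
  have hint : Integrable fun ω => ∫ y in (0 : ℝ)..(2 * π), F y ω :=
    .of_integral_ne_zero (by rw [hmass]; exact one_ne_zero)
  set r := ∫ ω', ∫ y in (0 : ℝ)..(2 * π), cos (θ - y) * F y ω'
  have hr : r ≤ 1 := hmass ▸ integral_intervalIntegral_mul_le hF hF0 h2π hint
    (c := fun y => cos (θ - y)) (by fun_prop) fun y => abs_cos_le_one _
  have hdF : HasDerivAt (fun x => F x ω) 0 θ := by
    simpa only [(IsLocalMax.hasDerivAt_eq_zero (.of_forall hmax) hdiff.hasDerivAt)] using
      hdiff.hasDerivAt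
  have hflux : HasDerivAt (fun x =>
      (ω - K * ∫ ω', ∫ y in (0 : ℝ)..(2 * π), sin (x - y) * F y ω') * F x ω)
      (-(K * r) * F θ ω) θ :=
    ((((hasDerivAt_integral_intervalIntegral_sin_sub_mul hF hF0 h2π hint θ).const_mul
      K).const_sub ω).mul hdF).congr_deriv (by ring)
  rw [hflux.deriv] at htransport
  have hKr : K * r * F θ ω ≤ K * 1 * F θ ω :=
    mul_le_mul_of_nonneg_right (mul_le_mul_of_nonneg_left hr hK) (hF0 θ ω)
  linarith

theorem lt_mul_exp_of_initial_lt {K K' C' : ℝ} (hK : 0 ≤ K) (hKK' : K < K') {f : ℝ → ℝ → ℝ → ℝ}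
    (hf : Differentiable ℝ fun p : ℝ × ℝ × ℝ => f p.1 p.2.1 p.2.2)
    (hper : ∀ θ ω t, f (θ + 2 * π) ω t = f θ ω t) (hpos : ∀ θ ω t, 0 ≤ f θ ω t)
    (hprob : ∀ t, ∫ ω, ∫ θ in (0 : ℝ)..(2 * π), f θ ω t = 1)
    (hPDE : ∀ θ ω t, deriv (fun s => f θ ω s) t + deriv (fun x =>
      (ω - K * ∫ ω', ∫ y in (0 : ℝ)..(2 * π), sin (x - y) * f y ω' t) * f x ω t) θ = 0)
    (h0 : ∀ θ ω, f θ ω 0 < C') (θ ω t : ℝ) (ht : 0 ≤ t) :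
    f θ ω t < C' * exp (K' * t) := by
  have hperiodic : ∀ t, Function.Periodic (fun θ => f θ ω t) (2 * π) := fun t θ => hper θ ω t
  have hψ : ∀ t, HasDerivAt (fun t => C' * exp (K' * t)) (K' * (C' * exp (K' * t))) t :=
    fun t => by simpa [mul_comm, mul_left_comm] using
      (((hasDerivAt_id t).const_mul K').exp).const_mul C'
  have hC' : 0 < C' := (hpos 0 ω 0).trans_lt (h0 0 ω)
  have hcontact : ∀ θ₀ ∈ Icc 0 (2 * π), ∀ t₀, 0 < t₀ → f θ₀ ω t₀ = C' * exp (K' * t₀) →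
      (∀ x ∈ Icc 0 (2 * π), f x ω t₀ ≤ C' * exp (K' * t₀)) →
      (∀ s ∈ Ico 0 t₀, f θ₀ ω s < C' * exp (K' * s)) → False := by
    intro θ₀ _ t₀ ht₀ heq hle hbefore
    have hmax : ∀ x, f x ω t₀ ≤ f θ₀ ω t₀ := fun x => by
      obtain ⟨x', hx', hfx⟩ := (hperiodic t₀).exists_mem_Ico₀ two_pi_pos x
      exact heq ▸ hfx ▸ hle x' (Ico_subset_Icc_self hx')
    have hupper : deriv (fun s => f θ₀ ω s) t₀ ≤ K * f θ₀ ω t₀ :=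
      le_mul_of_isMax_of_transport_eq_zero (F := fun y ω => f y ω t₀) hK
        (hf.continuous.comp (by fun_prop : Continuous fun p : ℝ × ℝ => (p.1, p.2, t₀)))
        (fun y ω => hpos y ω t₀) (hprob t₀)
        ((hf _).comp θ₀ (by fun_prop : DifferentiableAt ℝ (fun x : ℝ => (x, ω, t₀)) θ₀)) hmax
        (hPDE θ₀ ω t₀)
    have hlower : K' * (C' * exp (K' * t₀)) ≤ deriv (fun s => f θ₀ ω s) t₀ :=
      HasDerivAt.le_of_le_on_Ico_of_eq
        ((hf _).comp t₀ (by fun_prop : DifferentiableAt ℝ (fun s : ℝ => (θ₀, ω, s)) t₀)).hasDerivAt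
        (hψ t₀) ht₀ (fun s hs => (hbefore s hs).le) heq
    have hψpos : 0 < C' * exp (K' * t₀) := by positivity
    nlinarith [mul_pos (sub_pos.mpr hKK') hψpos]
  have hlt := isCompact_Icc.forall_lt_of_forall_not_contact (S := Icc 0 (2 * π))
    (u := fun θ t => f θ ω t) (ψ := fun t => C' * exp (K' * t))
    (hf.continuous.comp (by fun_prop : Continuous fun p : ℝ × ℝ => (p.1, ω, p.2)))
    (by fun_prop) (fun θ _ => by simpa using h0 θ ω) hcontact
  obtain ⟨θ', hθ', hfθ⟩ := (hperiodic t).exists_mem_Ico₀ two_pi_pos θ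
  exact hfθ ▸ hlt θ' (Ico_subset_Icc_self hθ') t ht

theorem stmt_13_general
    (K M : ℝ) (hK : 0 < K)
    (f : ℝ → ℝ → ℝ → ℝ)
    (hreg : ContDiff ℝ 1 (fun p : ℝ × ℝ × ℝ => f p.1 p.2.1 p.2.2))
    (hper : ∀ θ ω t, f (θ + 2 * Real.pi) ω t = f θ ω t)
    (hpos : ∀ θ ω t, 0 ≤ f θ ω t)
    (hprob : ∀ t, (∫ ω : ℝ, ∫ θ in (0 : ℝ)..(2 * Real.pi), f θ ω t) = 1)
    (hPDE : ∀ θ ω t,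
      deriv (fun s => f θ ω s) t +
        deriv (fun x =>
          (ω - K * ∫ ω' : ℝ, ∫ y in (0 : ℝ)..(2 * Real.pi), Real.sin (x - y) * f y ω' t)
            * f x ω t) θ = 0)
    (C : ℝ) (hC : ∀ θ ω, |f θ ω 0| ≤ C) :
    ∀ t, 0 ≤ t → ∀ θ ω, ω ∈ Set.Icc (-M) M →
      |f θ ω t| ≤ C * Real.exp (K * t) := by
  intro t ht θ ω _
  have hε : ∀ ε > 0, f θ ω t ≤ (C + ε) * exp ((K + ε) * t) := fun ε hε =>
    have h0 : ∀ θ ω, f θ ω 0 < C + ε := fun θ ω =>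
      (le_abs_self _).trans_lt ((hC θ ω).trans_lt (lt_add_of_pos_right C hε))
    (lt_mul_exp_of_initial_lt hK.le (lt_add_of_pos_right K hε)
      (hreg.differentiable one_ne_zero) hper hpos hprob hPDE h0 θ ω t ht).le
  have hlim : Tendsto (fun ε => (C + ε) * exp ((K + ε) * t)) (𝓝[>] 0) (𝓝 (C * exp (K * t))) := by
    have hcont : Continuous fun ε => (C + ε) * exp ((K + ε) * t) := by fun_prop
    simpa using (hcont.tendsto 0).mono_left nhdsWithin_le_nhds
  rw [abs_of_nonneg (hpos θ ω t)]
  exact ge_of_tendsto hlim (eventually_nhdsWithin_of_forall hε)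

/-- for a `C¹` solution `f` of the Kuramoto–Sakaguchi equation with
`supp g ⊆ [−M,M]` and bounded initial datum (`|f₀| ≤ C`), one has
`‖f(t)‖_{L∞(𝕋×[−M,M])} ≤ ‖f₀‖_{L∞} e^{Kt}` for all `t ≥ 0`. -/
theorem stmt_13
    (K M : ℝ) (hK : 0 < K)
    (f : ℝ → ℝ → ℝ → ℝ) (g : ℝ → ℝ) (R φ : ℝ → ℝ)
    (hreg : ContDiff ℝ 1 (fun p : ℝ × ℝ × ℝ => f p.1 p.2.1 p.2.2))
    (hper : ∀ θ ω t, f (θ + 2 * Real.pi) ω t = f θ ω t)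
    (hpos : ∀ θ ω t, 0 ≤ f θ ω t)
    (hprob : ∀ t, (∫ ω : ℝ, ∫ θ in (0 : ℝ)..(2 * Real.pi), f θ ω t) = 1)
    (hgdef : ∀ ω t, (∫ θ in (0 : ℝ)..(2 * Real.pi), f θ ω t) = g ω)
    (hPDE : ∀ θ ω t,
      deriv (fun s => f θ ω s) t +
        deriv (fun x =>
          (ω - K * ∫ ω' : ℝ, ∫ y in (0 : ℝ)..(2 * Real.pi), Real.sin (x - y) * f y ω' t)
            * f x ω t) θ = 0)
    (hRnn : ∀ t, 0 ≤ R t)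
    (hRcos : ∀ t, R t * Real.cos (φ t)
      = ∫ ω : ℝ, ∫ θ in (0 : ℝ)..(2 * Real.pi), Real.cos θ * f θ ω t)
    (hRsin : ∀ t, R t * Real.sin (φ t)
      = ∫ ω : ℝ, ∫ θ in (0 : ℝ)..(2 * Real.pi), Real.sin θ * f θ ω t)
    (hsupp : ∀ ω, ω ∉ Set.Icc (-M) M → g ω = 0)
    (C : ℝ) (hC : ∀ θ ω, |f θ ω 0| ≤ C) :
    ∀ t, 0 ≤ t → ∀ θ ω, ω ∈ Set.Icc (-M) M →
      |f θ ω t| ≤ C * Real.exp (K * t) :=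
  stmt_13_general K M hK f hreg hper hpos hprob hPDE C hC
end
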